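/- arXiv:1203.5578 — 2 statements merged into one kernel-verified Lean document; each statement's English description precedes it below -/
import Mathlib

section
/- Let (R, m) be a Noetherian local ring of dimension d ≥ 1, J an m-primary ideal, and I an m-primary ideal with J ⊆ I and J a reduction of I. Then f₀(I) − f₀(J) ≤ e₁(I) − e₁(J). -/
/-!
Adding generators of `Iⁿ` to `Jⁿ` one at a time, each new generator raises the number of
generators by at most one and, unless redundant, lowers the colength by at least one; hence
`ν(Iⁿ) + λ(R/Iⁿ) ≤ ν(Jⁿ) + λ(R/Jⁿ)`. From `I^(n+s) ⊆ Jⁿ ⊆ Iⁿ`, where `I^(s+1) = J·Iˢ`, the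
Hilbert–Samuel polynomials of `I` and `J` share their leading coefficient `e₀`. So for `n ≫ 0`
both sides of that inequality are polynomials with the same degree-`d` part, and comparing the
coefficients of `C(n+d-2, d-1)` gives `f₀(I) - e₁(I) ≤ f₀(J) - e₁(J)`.
-/

open Filter IsLocalRing Polynomial

/-- The length of an `R`-module `M`, as the Krull dimension of its submodule lattice. -/
noncomputable def mLength (R : Type*) (M : Type*) [CommRing R] [AddCommGroup M] [Module R M] :
    WithBot ℕ∞ :=
  Order.krullDim (Submodule R M)

/-- The minimal number of generators of a submodule. -/
noncomputable def nu {R M : Type*} [CommRing R] [AddCommGroup M] [Module R M]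
    (N : Submodule R M) : ℕ :=
  sInf {n | ∃ s : Finset M, s.card = n ∧ Submodule.span R (s : Set M) = N}

/-- `J` is a reduction of `I`: `J ⊆ I` and `I^(n+1) = J·Iⁿ` for some `n`
(equivalently, `I` is integral over `J`). -/
def IsReduction {R : Type*} [CommRing R] (J I : Ideal R) : Prop :=
  J ≤ I ∧ ∃ n, I ^ (n + 1) = J * I ^ n

/-- The reduction number of `I` with respect to `J`: the least `s` with `I^(s+1) = J·I^s`. -/
noncomputable def redNum {R : Type*} [CommRing R] (J I : Ideal R) : ℕ :=
  sInf {s | I ^ (s + 1) = J * I ^ s}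

/-- `Q` is a minimal reduction of the `m`-primary ideal `I` in a `d`-dimensional local ring:
a reduction of `I` generated by `d` elements (a parameter ideal). -/
def IsMinimalReduction {R : Type*} [CommRing R] (d : ℕ) (Q I : Ideal R) : Prop :=
  IsReduction Q I ∧ ∃ s : Finset R, s.card = d ∧ Q = Ideal.span (s : Set R)

/-- `HasMultiplicity I d e0` : for `n ≫ 0`,
`λ(R/Iⁿ) = e0·C(n+d−1, d) + (terms of degree < d in n)`;
i.e. `e0 = e₀(I)` is the Hilbert–Samuel multiplicity of `I`. -/
def HasMultiplicity {R : Type*} [CommRing R] (I : Ideal R) (d : ℕ) (e0 : ℤ) : Prop :=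
  ∃ (p : Polynomial ℚ) (lam : ℕ → ℕ), p.degree < (d : ℕ) ∧
    (∀ n, mLength R (R ⧸ I ^ n) = lam n) ∧
    ∀ᶠ n : ℕ in atTop,
      (lam n : ℚ) = e0 * ((n + d - 1).choose d) + p.eval (n : ℚ)

/-- `HasHilbertCoeffs I d e0 e1` : for `n ≫ 0`,
`λ(R/Iⁿ) = e0·C(n+d−1, d) − e1·C(n+d−2, d−1) + (terms of degree < d−1 in n)`;
i.e. `e0 = e₀(I)` and `e1 = e₁(I)` are the first two Hilbert coefficients of `I`. -/
def HasHilbertCoeffs {R : Type*} [CommRing R] (I : Ideal R) (d : ℕ) (e0 e1 : ℤ) : Prop :=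
  ∃ (p : Polynomial ℚ) (lam : ℕ → ℕ), p.degree < ((d - 1 : ℕ) : WithBot ℕ) ∧
    (∀ n, mLength R (R ⧸ I ^ n) = lam n) ∧
    ∀ᶠ n : ℕ in atTop,
      (lam n : ℚ) = e0 * ((n + d - 1).choose d) - e1 * ((n + d - 2).choose (d - 1))
        + p.eval (n : ℚ)

/-- `IsFiberMult f d f0` : the function `f` (e.g. `n ↦ ν(Jⁿ)`) agrees for `n ≫ 0` with a
polynomial of degree `d − 1` in `n` with normalized leading coefficient `f0`. -/
def IsFiberMult (f : ℕ → ℕ) (d : ℕ) (f0 : ℕ) : Prop :=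
  ∃ p : Polynomial ℚ, p.degree < ((d - 1 : ℕ) : WithBot ℕ) ∧
    ∀ᶠ n : ℕ in atTop,
      (f n : ℚ) = f0 * ((n + d - 2).choose (d - 1)) + p.eval (n : ℚ)

/-- `f0 = f₀(J)` is the multiplicity of the special fiber ring `⊕ Jⁿ/mJⁿ`, i.e. the
normalized leading coefficient of the polynomial giving `ν(Jⁿ)` for `n ≫ 0`. -/
def HasFiberMult {R : Type*} [CommRing R] (J : Ideal R) (d : ℕ) (f0 : ℕ) : Prop :=
  IsFiberMult (fun n => nu (J ^ n)) d f0

section Generators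

open Submodule Order

variable {R M : Type*} [CommRing R] [AddCommGroup M] [Module R M]

lemma mLength_quotient (N : Submodule R M) : mLength R (M ⧸ N) = coheight N := by
  rw [mLength, ← Module.coe_length, Module.length_quotient]

lemma nu_le_card {N : Submodule R M} {s : Finset M} (hs : span R (s : Set M) = N) :
    nu N ≤ s.card :=
  Nat.sInf_le ⟨s, rfl, hs⟩

lemma exists_finset_card_eq_nu {N : Submodule R M} (hN : N.FG) :
    ∃ s : Finset M, s.card = nu N ∧ span R (s : Set M) = N :=
  Nat.sInf_mem (s := {n | ∃ s : Finset M, s.card = n ∧ span R (s : Set M) = N})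
    (let ⟨s, hs⟩ := hN; ⟨s.card, s, rfl, hs⟩)

lemma nu_sup_span_singleton_le [DecidableEq M] {N : Submodule R M} (hN : N.FG) (x : M) :
    nu (N ⊔ R ∙ x) ≤ nu N + 1 := by
  obtain ⟨s, hcard, hs⟩ := exists_finset_card_eq_nu hN
  calc nu (N ⊔ R ∙ x) ≤ (insert x s).card :=
        nu_le_card (by rw [Finset.coe_insert, span_insert, hs, sup_comm])
    _ ≤ nu N + 1 := hcard ▸ Finset.card_insert_le x s

lemma nu_add_coheight_le {N P : Submodule R M} (hN : N.FG) (hP : P.FG) (hNP : N ≤ P) :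
    (nu P : ℕ∞) + coheight P ≤ nu N + coheight N := by
  classical
  obtain ⟨u, rfl⟩ := hP
  rw [← sup_eq_right.mpr hNP]
  clear hNP
  induction u using Finset.induction_on with
  | empty => simp
  | insert x u _ ih =>
    set N' := N ⊔ span R (u : Set M)
    have hN' : N'.FG := hN.sup (fg_span u.finite_toSet)
    rw [Finset.coe_insert, span_insert, sup_left_comm, ← sup_comm]
    by_cases hx : x ∈ N'
    · rwa [sup_eq_left.mpr ((span_singleton_le_iff_mem x N').mpr hx)]
    have hlt : N' < N' ⊔ R ∙ x :=
      left_lt_sup.mpr fun h => hx ((span_singleton_le_iff_mem x N').mp h)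
    calc (nu (N' ⊔ R ∙ x) : ℕ∞) + coheight (N' ⊔ R ∙ x)
        ≤ nu N' + 1 + coheight (N' ⊔ R ∙ x) := by
          gcongr; exact_mod_cast nu_sup_span_singleton_le hN' x
      _ ≤ nu N' + coheight N' := by
          rw [add_assoc, add_comm 1]; gcongr; exact coheight_add_one_le hlt
      _ ≤ nu N + coheight N := ih

end Generators

open scoped Nat

section PreHilbertPoly

variable {K : Type*} [Field K] [CharZero K] {k : ℕ} {r : K[X]}

lemma natDegree_C_mul_preHilbertPoly_add_le (a : K) (i : ℕ) (hr : r.degree < k) :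
    (C a * preHilbertPoly K k i + r).natDegree ≤ k := by
  refine natDegree_add_le_of_degree_le ?_ (natDegree_le_iff_degree_le.mpr hr.le)
  exact (natDegree_C_mul_le _ _).trans (natDegree_preHilbertPoly K k i).le

lemma coeff_C_mul_preHilbertPoly_add (a : K) (i : ℕ) (hr : r.degree < k) :
    (C a * preHilbertPoly K k i + r).coeff k = a / k ! := by
  rw [coeff_add, coeff_C_mul, coeff_preHilbertPoly_self, coeff_eq_zero_of_degree_lt hr, add_zero,
    div_eq_mul_inv]

end PreHilbertPoly

lemma coeff_taylor_of_natDegree_le {R : Type*} [Semiring R] {f : R[X]} {k : ℕ} (r : R)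
    (hf : f.natDegree ≤ k) : (taylor r f).coeff k = f.coeff k := by
  rcases hf.lt_or_eq with hlt | rfl
  · rw [coeff_eq_zero_of_natDegree_lt hlt,
      coeff_eq_zero_of_natDegree_lt ((natDegree_taylor f r).trans_lt hlt)]
  · exact coeff_taylor_natDegree r f

section Asymptotics

variable {K : Type*} [NormedField K] [LinearOrder K] [IsStrictOrderedRing K] [OrderTopology K]
  [Archimedean K]

lemma coeff_nonneg_of_eventually_eval_nonneg {P : K[X]} {k : ℕ} (hP : P.natDegree ≤ k)
    (h : ∀ᶠ n : ℕ in atTop, 0 ≤ P.eval (n : K)) : 0 ≤ P.coeff k := by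
  by_contra! hneg
  have hk : P.natDegree = k := hP.antisymm (le_natDegree_of_ne_zero hneg.ne)
  have hlead : P.leadingCoeff < 0 := by rwa [leadingCoeff, hk]
  have hneg_eval : ∀ᶠ n : ℕ in atTop, P.eval (n : K) < 0 := by
    rcases Nat.eq_zero_or_pos k with rfl | hpos
    · rw [leadingCoeff, hk] at hlead
      refine Eventually.of_forall fun n => ?_
      rwa [eq_C_of_natDegree_eq_zero hk, eval_C]
    · have hdeg : 0 < P.degree := by
        rw [degree_eq_natDegree (leadingCoeff_ne_zero.mp hlead.ne), hk]
        exact_mod_cast hpos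
      exact ((P.tendsto_atBot_of_leadingCoeff_nonpos hdeg hlead.le).comp
        tendsto_natCast_atTop_atTop).eventually (eventually_lt_atBot 0)
  obtain ⟨n, hn, hn'⟩ := (h.and hneg_eval).exists
  exact hn'.not_ge hn

lemma coeff_le_coeff_of_eventually_eval_le {P Q : K[X]} {k : ℕ} (hP : P.natDegree ≤ k)
    (hQ : Q.natDegree ≤ k) (h : ∀ᶠ n : ℕ in atTop, P.eval (n : K) ≤ Q.eval (n : K)) :
    P.coeff k ≤ Q.coeff k := by
  have := coeff_nonneg_of_eventually_eval_nonneg ((natDegree_sub_le Q P).trans (max_le hQ hP))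
    (h.mono fun n hn => by rwa [eval_sub, sub_nonneg])
  rwa [coeff_sub, sub_nonneg] at this

lemma coeff_le_coeff_of_eventually_eval_le_eval_add {P Q : K[X]} {k : ℕ} (c : K)
    (hP : P.natDegree ≤ k) (hQ : Q.natDegree ≤ k)
    (h : ∀ᶠ n : ℕ in atTop, P.eval (n : K) ≤ Q.eval (n + c)) : P.coeff k ≤ Q.coeff k := by
  rw [← coeff_taylor_of_natDegree_le c hQ]
  exact coeff_le_coeff_of_eventually_eval_le hP ((natDegree_taylor Q c).trans_le hQ)
    (h.mono fun n hn => by rwa [taylor_eval])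

end Asymptotics

lemma pow_add_eq_pow_mul_pow_of_pow_succ_eq {M : Type*} [CommMonoid M] {a b : M} {s : ℕ}
    (h : a ^ (s + 1) = b * a ^ s) (n : ℕ) : a ^ (n + s) = b ^ n * a ^ s := by
  induction n with
  | zero => simp
  | succ n ih => rw [add_right_comm, pow_succ, ih, mul_assoc, ← pow_succ, h, pow_succ, mul_assoc]

section HilbertSamuelPoly

variable {d : ℕ} {e0 e1 : ℚ} {q : ℚ[X]}

/-- `e0·C(n+d-1, d) - e1·C(n+d-2, d-1) + q(n)` as a polynomial in `n`: for `n ≥ 1`,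
`preHilbertPoly ℚ k 1` evaluates to `C(n+k-1, k)`. -/
noncomputable def hilbertSamuelPoly (d : ℕ) (e0 e1 : ℚ) (q : ℚ[X]) : ℚ[X] :=
  C e0 * preHilbertPoly ℚ d 1 + (q - C e1 * preHilbertPoly ℚ (d - 1) 1)

lemma eval_hilbertSamuelPoly (hd : 1 ≤ d) {n : ℕ} (hn : 1 ≤ n) :
    (hilbertSamuelPoly d e0 e1 q).eval (n : ℚ) =
      e0 * ((n + d - 1).choose d : ℕ) - e1 * ((n + d - 2).choose (d - 1) : ℕ) +
        q.eval (n : ℚ) := by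
  rw [hilbertSamuelPoly, eval_add, eval_sub, eval_mul, eval_mul, eval_C, eval_C,
    preHilbertPoly_eq_choose_sub_add ℚ _ hn, preHilbertPoly_eq_choose_sub_add ℚ _ hn,
    show n - 1 + d = n + d - 1 by omega, show n - 1 + (d - 1) = n + d - 2 by omega]
  ring

lemma degree_sub_C_mul_preHilbertPoly_lt (hd : 1 ≤ d) (hq : q.degree < (d - 1 : ℕ)) :
    (q - C e1 * preHilbertPoly ℚ (d - 1) 1).degree < d := by
  have hd' : ((d - 1 : ℕ) : WithBot ℕ) < d := by exact_mod_cast Nat.sub_lt hd one_pos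
  refine (degree_sub_le _ _).trans_lt (max_lt (hq.trans hd') (lt_of_le_of_lt ?_ hd'))
  exact degree_le_of_natDegree_le
    ((natDegree_C_mul_le _ _).trans (natDegree_preHilbertPoly ℚ _ _).le)

lemma natDegree_hilbertSamuelPoly_le (hd : 1 ≤ d) (hq : q.degree < (d - 1 : ℕ)) :
    (hilbertSamuelPoly d e0 e1 q).natDegree ≤ d :=
  natDegree_C_mul_preHilbertPoly_add_le _ _ (degree_sub_C_mul_preHilbertPoly_lt hd hq)

lemma coeff_hilbertSamuelPoly (hd : 1 ≤ d) (hq : q.degree < (d - 1 : ℕ)) :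
    (hilbertSamuelPoly d e0 e1 q).coeff d = e0 / d ! :=
  coeff_C_mul_preHilbertPoly_add _ _ (degree_sub_C_mul_preHilbertPoly_lt hd hq)

end HilbertSamuelPoly

lemma IsFiberMult.exists_eventually_eq_eval {f : ℕ → ℕ} {d f0 : ℕ} (h : IsFiberMult f d f0)
    (hd : 1 ≤ d) :
    ∃ p : ℚ[X], p.degree < (d - 1 : ℕ) ∧
      ∀ᶠ n : ℕ in atTop, (f n : ℚ) = (C (f0 : ℚ) * preHilbertPoly ℚ (d - 1) 1 + p).eval ↑n := by
  obtain ⟨p, hp, hev⟩ := h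
  refine ⟨p, hp, ?_⟩
  filter_upwards [hev, eventually_ge_atTop 1] with n hn hn1
  rw [hn, eval_add, eval_mul, eval_C, preHilbertPoly_eq_choose_sub_add ℚ _ hn1,
    show n - 1 + (d - 1) = n + d - 2 by omega]

section Ideals

open Order

variable {R : Type*} [CommRing R] {d : ℕ}

lemma HasHilbertCoeffs.exists_eventually_eq_eval {I : Ideal R} {e0 e1 : ℤ}
    (h : HasHilbertCoeffs I d e0 e1) (hd : 1 ≤ d) :
    ∃ (q : ℚ[X]) (lam : ℕ → ℕ), q.degree < (d - 1 : ℕ) ∧ (∀ n, coheight (I ^ n) = lam n) ∧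
      ∀ᶠ n : ℕ in atTop, (lam n : ℚ) = (hilbertSamuelPoly d e0 e1 q).eval (n : ℚ) := by
  obtain ⟨q, lam, hq, hlam, hev⟩ := h
  refine ⟨q, lam, hq, fun n => ?_, ?_⟩
  · have := hlam n
    rw [mLength_quotient] at this
    exact_mod_cast this
  · filter_upwards [hev, eventually_ge_atTop 1] with n hn hn1
    rw [hn, eval_hilbertSamuelPoly hd hn1]

theorem IsReduction.e0_eq {J I : Ideal R} (hred : IsReduction J I) (hd : 1 ≤ d)
    {e0J e1J e0I e1I : ℤ} (hJc : HasHilbertCoeffs J d e0J e1J)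
    (hIc : HasHilbertCoeffs I d e0I e1I) : e0I = e0J := by
  obtain ⟨hJI, s, hs⟩ := hred
  obtain ⟨qJ, lamJ, hqJ, hlamJ, hevJ⟩ := hJc.exists_eventually_eq_eval hd
  obtain ⟨qI, lamI, hqI, hlamI, hevI⟩ := hIc.exists_eventually_eq_eval hd
  have hle n : lamI n ≤ lamJ n := by
    have := coheight_anti (Ideal.pow_right_mono hJI n)
    rwa [hlamI, hlamJ, Nat.cast_le] at this
  have hle_shift n : lamJ n ≤ lamI (n + s) := by
    have hsub : I ^ (n + s) ≤ J ^ n := by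
      rw [pow_add_eq_pow_mul_pow_of_pow_succ_eq hs n]
      exact Ideal.mul_le_left
    have := coheight_anti hsub
    rwa [hlamI, hlamJ, Nat.cast_le] at this
  have h1 := coeff_le_coeff_of_eventually_eval_le (k := d)
    (natDegree_hilbertSamuelPoly_le hd hqI) (natDegree_hilbertSamuelPoly_le hd hqJ)
    (by filter_upwards [hevI, hevJ] with n hI hJ; rw [← hI, ← hJ]; exact_mod_cast hle n)
  have h2 := coeff_le_coeff_of_eventually_eval_le_eval_add (k := d) (s : ℚ)
    (natDegree_hilbertSamuelPoly_le hd hqJ) (natDegree_hilbertSamuelPoly_le hd hqI)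
    (by
      filter_upwards [hevJ, (tendsto_add_atTop_nat s).eventually hevI] with n hJ hI
      rw [← hJ, ← Nat.cast_add, ← hI]
      exact_mod_cast hle_shift n)
  rw [coeff_hilbertSamuelPoly hd hqI, coeff_hilbertSamuelPoly hd hqJ] at h1 h2
  exact_mod_cast (div_left_inj' (by positivity)).mp (le_antisymm h1 h2)

theorem f0_sub_f0_le_e1_sub_e1_of_le [IsNoetherianRing R] {J I : Ideal R} (hJI : J ≤ I)
    (hd : 1 ≤ d) {e0 e1J e1I : ℤ} (hJc : HasHilbertCoeffs J d e0 e1J)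
    (hIc : HasHilbertCoeffs I d e0 e1I) {f0J f0I : ℕ} (hf0J : HasFiberMult J d f0J)
    (hf0I : HasFiberMult I d f0I) : (f0I : ℤ) - f0J ≤ e1I - e1J := by
  obtain ⟨qJ, lamJ, hqJ, hlamJ, hevJ⟩ := hJc.exists_eventually_eq_eval hd
  obtain ⟨qI, lamI, hqI, hlamI, hevI⟩ := hIc.exists_eventually_eq_eval hd
  obtain ⟨pJ, hpJ, hnuJ⟩ := IsFiberMult.exists_eventually_eq_eval hf0J hd
  obtain ⟨pI, hpI, hnuI⟩ := IsFiberMult.exists_eventually_eq_eval hf0I hd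
  have hnu n : nu (I ^ n) + lamI n ≤ nu (J ^ n) + lamJ n := by
    have := nu_add_coheight_le (IsNoetherian.noetherian _) (IsNoetherian.noetherian _)
      (Ideal.pow_right_mono hJI n)
    rw [hlamI, hlamJ] at this
    exact_mod_cast this
  set H := preHilbertPoly ℚ (d - 1) 1
  -- the degree-`d` parts of both sides are `e0 * C(n+d-1, d)`, and cancel
  have hsplit (f0 e1 : ℚ) (p q : ℚ[X]) (x : ℚ) :
      (C f0 * H + p).eval x + (hilbertSamuelPoly d e0 e1 q).eval x =
        e0 * (preHilbertPoly ℚ d 1).eval x + (C (f0 - e1) * H + (p + q)).eval x := by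
    simp only [hilbertSamuelPoly, eval_add, eval_sub, eval_mul, eval_C]
    ring
  have hdeg {p q : ℚ[X]} (hp : p.degree < (d - 1 : ℕ)) (hq : q.degree < (d - 1 : ℕ)) :
      (p + q).degree < (d - 1 : ℕ) := (degree_add_le p q).trans_lt (max_lt hp hq)
  have h := coeff_le_coeff_of_eventually_eval_le (k := d - 1)
    (natDegree_C_mul_preHilbertPoly_add_le (f0I - e1I : ℚ) 1 (hdeg hpI hqI))
    (natDegree_C_mul_preHilbertPoly_add_le (f0J - e1J : ℚ) 1 (hdeg hpJ hqJ))
    (by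
      filter_upwards [hnuI, hnuJ, hevI, hevJ] with n h1 h2 h3 h4
      have h' : (nu (I ^ n) + lamI n : ℚ) ≤ nu (J ^ n) + lamJ n := by exact_mod_cast hnu n
      rw [h1, h2, h3, h4, hsplit, hsplit] at h'
      linarith)
  rw [coeff_C_mul_preHilbertPoly_add _ _ (hdeg hpI hqI),
    coeff_C_mul_preHilbertPoly_add _ _ (hdeg hpJ hqJ)] at h
  have := (div_le_div_iff_of_pos_right (by positivity)).mp h
  have : ((f0I : ℤ) : ℚ) - f0J ≤ e1I - e1J := by push_cast; linarith
  exact_mod_cast this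

end Ideals

theorem f0_sub_f0_le_e1_sub_e1_general
    (R : Type*) [CommRing R] [IsNoetherianRing R]
    (d : ℕ) (hd : 1 ≤ d)
    (J I : Ideal R)
    (hred : IsReduction J I)
    (e0J e1J e0I e1I : ℤ)
    (hJc : HasHilbertCoeffs J d e0J e1J) (hIc : HasHilbertCoeffs I d e0I e1I)
    (f0J f0I : ℕ) (hf0J : HasFiberMult J d f0J) (hf0I : HasFiberMult I d f0I) :
    (f0I : ℤ) - f0J ≤ e1I - e1J := by
  obtain rfl := hred.e0_eq hd hJc hIc
  exact f0_sub_f0_le_e1_sub_e1_of_le hred.1 hd hJc hIc hf0J hf0I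

/-- Let `(R, m)` be a Noetherian local ring of dimension `d ≥ 1`, `J` an `m`-primary ideal,
and `I` an `m`-primary ideal with `J ⊆ I` and `J` a reduction of `I`. Then
`f₀(I) − f₀(J) ≤ e₁(I) − e₁(J)`. -/
theorem f0_sub_f0_le_e1_sub_e1
    (R : Type*) [CommRing R] [IsNoetherianRing R] [IsLocalRing R]
    (d : ℕ) (hd : 1 ≤ d) (hdim : ringKrullDim R = d)
    (J I : Ideal R)
    (hJ : J.radical = maximalIdeal R) (hI : I.radical = maximalIdeal R)
    (hred : IsReduction J I)
    (e0J e1J e0I e1I : ℤ)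
    (hJc : HasHilbertCoeffs J d e0J e1J) (hIc : HasHilbertCoeffs I d e0I e1I)
    (f0J f0I : ℕ) (hf0J : HasFiberMult J d f0J) (hf0I : HasFiberMult I d f0I) :
    (f0I : ℤ) - f0J ≤ e1I - e1J :=
  f0_sub_f0_le_e1_sub_e1_general R d hd J I hred e0J e1J e0I e1I hJc hIc f0J f0I hf0J hf0I
end

section
/- Let (R, m) be a Noetherian local ring of dimension d ≥ 1 with infinite residue field, I an m-primary ideal, and J a minimal reduction of I generated by a system of parameters x₁,…,x_d. Then for every n ≥ 1, ν(Iⁿ) ≤ binom(d+n−2, d−2) + λ(R/J) · binom(d+n−2, d−1). -/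
open Filter IsLocalRing Polynomial

/-!
Write `J = L + (x)` with `x = x₁` and `L = (x₂, …, x_d)`. Since `L ⊆ J ⊆ I`, the chain
`Iⁿ ∩ Lⁱ`, `i ≤ n`, runs from `Iⁿ` down to `Lⁿ`, so `ν(Iⁿ) ≤ ν(Lⁿ) + ∑_{i<n} ν(Uᵢ)`, where `Uᵢ` is the image of
`Iⁿ ∩ Lⁱ` in `Eᵢ = Lⁱ/Lⁱ⁺¹`. The module `Eᵢ` is killed by `L`, so `Eᵢ/xEᵢ` is killed by `J`, and
`ν(Uᵢ) ≤ λ(Uᵢ/xUᵢ) ≤ λ(Eᵢ/xEᵢ) ≤ ν(Eᵢ)·λ(R/J) ≤ ν(Lⁱ)·λ(R/J)`: the first step is Nakayama, the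
second rests on the inequality `λ(0 :_C x) ≤ λ(C/xC)` for Noetherian modules `C`. Counting
monomials, `ν(Lⁱ) ≤ C(d+i-2, i)`, and the hockey-stick identity sums these up.
-/

open Submodule

lemma nu_eq_spanFinrank {R M : Type*} [CommRing R] [AddCommGroup M] [Module R M]
    (N : Submodule R M) : nu N = N.spanFinrank := by
  rw [spanFinrank_eq_iInf, nu, iInf]
  congr 1
  ext n
  exact ⟨fun ⟨s, hs, hN⟩ => ⟨⟨s, hN⟩, hs⟩, fun ⟨s, hs⟩ => ⟨s.1, hs, s.2⟩⟩

lemma mLength_eq_length (R M : Type*) [CommRing R] [AddCommGroup M] [Module R M] :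
    mLength R M = Module.length R M :=
  (Module.coe_length R M).symm

namespace Module

variable {R : Type*} [Ring R] {M N P : Type*} [AddCommGroup M] [Module R M]
  [AddCommGroup N] [Module R N] [AddCommGroup P] [Module R P]

lemma length_submodule_mono {A B : Submodule R M} (h : A ≤ B) :
    Module.length R A ≤ Module.length R B :=
  length_le_of_injective (inclusion h) (inclusion_injective h)

lemma length_eq_length_submodule_add_length_quotient (p : Submodule R M) :
    Module.length R M = Module.length R p + Module.length R (M ⧸ p) :=
  length_eq_add_of_exact _ _ p.injective_subtype p.mkQ_surjective (LinearMap.exact_subtype_mkQ p)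

lemma length_eq_length_ker_add (g : M →ₗ[R] N) (hg : Function.Surjective g) :
    Module.length R M = Module.length R (LinearMap.ker g) + Module.length R N :=
  length_eq_add_of_exact _ g (LinearMap.ker g).injective_subtype hg
    (LinearMap.exact_subtype_ker_map g)

lemma length_eq_length_ker_add_length_range (g : M →ₗ[R] N) :
    Module.length R M =
      Module.length R (LinearMap.ker g) + Module.length R (LinearMap.range g) := by
  rw [length_eq_length_ker_add g.rangeRestrict g.surjective_rangeRestrict,
    LinearMap.ker_rangeRestrict]

lemma length_le_length_range_add_length_range (h : N →ₗ[R] M) (g : M →ₗ[R] P)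
    (hgh : LinearMap.ker g ≤ LinearMap.range h) :
    Module.length R M ≤
      Module.length R (LinearMap.range h) + Module.length R (LinearMap.range g) := by
  rw [length_eq_length_ker_add_length_range g]
  gcongr
  exact length_submodule_mono hgh

lemma length_range_le_of_ker_le (α : M →ₗ[R] N) (β : M →ₗ[R] P)
    (h : LinearMap.ker α ≤ LinearMap.ker β) :
    Module.length R (LinearMap.range β) ≤ Module.length R (LinearMap.range α) := by
  rw [← α.quotKerEquivRange.length_eq, ← β.quotKerEquivRange.length_eq]
  exact length_le_of_surjective _ (factor_surjective h)

lemma length_ker_eq_length_quotient_range (f : M →ₗ[R] M) (h : Module.length R M ≠ ⊤) :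
    Module.length R (LinearMap.ker f) = Module.length R (M ⧸ LinearMap.range f) := by
  refine WithTop.add_right_cancel (z := Module.length R (LinearMap.range f)) ?_ ?_
  · exact ne_top_of_le_ne_top h (length_le_of_injective _ (LinearMap.range f).injective_subtype)
  · exact (length_eq_length_ker_add_length_range f).symm.trans
      ((length_eq_length_submodule_add_length_quotient _).trans (add_comm _ _))

lemma length_le_mul_length_quotient_range_of_pow_eq_zero (g : M →ₗ[R] M) {k : ℕ}
    (hk : g ^ k = 0) : Module.length R M ≤ k * Module.length R (M ⧸ LinearMap.range g) := by
  induction k generalizing M with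
  | zero =>
    have : Subsingleton M := subsingleton_of_forall_eq 0 fun m => by
      simpa using LinearMap.congr_fun hk m
    simp [length_eq_zero]
  | succ k ih =>
    have hg : ∀ m ∈ LinearMap.range g, g m ∈ LinearMap.range g := fun m _ => ⟨m, rfl⟩
    set g' := g.restrict hg
    have hg' : g' ^ k = 0 := by
      rw [Module.End.pow_restrict]
      ext ⟨_, m, rfl⟩
      simpa [← Module.End.mul_apply, ← pow_succ] using LinearMap.congr_fun hk m
    have hsurj : Function.Surjective ((LinearMap.range g).mapQ (LinearMap.range g')
        g.rangeRestrict (by rintro _ ⟨m, rfl⟩; exact ⟨⟨g m, m, rfl⟩, rfl⟩)) := by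
      rintro ⟨q⟩
      obtain ⟨m, rfl⟩ := g.surjective_rangeRestrict q
      exact ⟨Submodule.Quotient.mk m, rfl⟩
    calc Module.length R M
        = Module.length R (LinearMap.range g) + Module.length R (M ⧸ LinearMap.range g) :=
          length_eq_length_submodule_add_length_quotient _
      _ ≤ k * Module.length R (M ⧸ LinearMap.range g) +
            Module.length R (M ⧸ LinearMap.range g) := by
          gcongr
          exact (ih g' hg').trans (by gcongr; exact length_le_of_surjective _ hsurj)
      _ = (k + 1 : ℕ) * Module.length R (M ⧸ LinearMap.range g) := by push_cast; ring

lemma length_ker_le_length_quotient_range [IsNoetherian R M] (f : M →ₗ[R] M) :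
    Module.length R (LinearMap.ker f) ≤ Module.length R (M ⧸ LinearMap.range f) := by
  obtain ⟨k, hk⟩ := monotone_stabilizes_iff_noetherian.mpr inferInstance f.iterateKer
  have hk : LinearMap.ker (f ^ (k + 1)) = LinearMap.ker (f ^ k) := (hk (k + 1) k.le_succ).symm
  set N := LinearMap.ker (f ^ k)
  have hN : ∀ m ∈ N, f m ∈ N := fun m hm => by
    rw [LinearMap.mem_ker, ← Module.End.mul_apply, ← pow_succ, ← LinearMap.mem_ker, hk]
    exact hm
  set g := f.restrict hN
  have hgk : g ^ k = 0 := by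
    rw [Module.End.pow_restrict]
    ext ⟨m, hm⟩
    exact hm
  -- `N ∩ f M = g N`, because `f m ∈ N` forces `m ∈ ker f^(k+1) = N`
  have hinj : Function.Injective ((LinearMap.range g).mapQ (LinearMap.range f) N.subtype
      (by rintro _ ⟨m, rfl⟩; exact ⟨m, rfl⟩)) := by
    rw [← LinearMap.ker_eq_bot, eq_bot_iff]
    rintro ⟨n⟩ hn
    obtain ⟨m, hm⟩ : (n : M) ∈ LinearMap.range f := (Submodule.Quotient.mk_eq_zero _).mp hn
    have hmN : m ∈ N := by
      rw [← hk, LinearMap.mem_ker, pow_succ, Module.End.mul_apply, hm]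
      exact n.2
    exact (Submodule.Quotient.mk_eq_zero _).mpr ⟨⟨m, hmN⟩, Subtype.ext hm⟩
  have hker : Module.length R (LinearMap.ker f) = Module.length R (LinearMap.ker g) := by
    rw [LinearMap.ker_restrict]
    refine (Submodule.comapSubtypeEquivOfLe fun m hm => ?_).length_eq.symm
    rw [← hk, LinearMap.mem_ker, pow_succ, Module.End.mul_apply, LinearMap.mem_ker.mp hm,
      map_zero]
  by_cases htop : Module.length R (M ⧸ LinearMap.range f) = ⊤
  · simp [htop]
  have hfin : Module.length R N ≠ ⊤ := by
    refine ne_top_of_le_ne_top ?_ (length_le_mul_length_quotient_range_of_pow_eq_zero g hgk)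
    exact ne_top_of_le_ne_top (WithTop.mul_ne_top (ENat.natCast_ne_top k) htop)
      (mul_le_mul_right (length_le_of_injective _ hinj) _)
  rw [hker, length_ker_eq_length_quotient_range g hfin]
  exact length_le_of_injective _ hinj

/-- Snake lemma for `f` acting on `0 → U → M → M/U → 0`: the kernel of `U/fU → M/fM` is the image
of the connecting map (here `β`, defined on `W = f⁻¹ U`) out of `ker (f on M/U)`, whose length is
at most that of `(M/U)/f(M/U)`, the cokernel of `U/fU → M/fM`. -/
lemma length_quotient_range_restrict_le [IsNoetherian R M] (f : M →ₗ[R] M) (U : Submodule R M)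
    (hU : ∀ m ∈ U, f m ∈ U) :
    Module.length R (U ⧸ LinearMap.range (f.restrict hU)) ≤
      Module.length R (M ⧸ LinearMap.range f) := by
  set fU := f.restrict hU
  set f' := U.mapQ U f hU
  set φ := (LinearMap.range fU).mapQ (LinearMap.range f) U.subtype
    (by rintro _ ⟨u, rfl⟩; exact ⟨u, rfl⟩)
  set ψ := (LinearMap.range f).mapQ (LinearMap.range f') U.mkQ
    (by rintro _ ⟨m, rfl⟩; exact ⟨U.mkQ m, rfl⟩)
  set W := U.comap f
  set α := U.mkQ ∘ₗ W.subtype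
  set β := (LinearMap.range fU).mkQ ∘ₗ f.restrict (p := W) (q := U) fun _ hw => hw
  have hφβ : LinearMap.ker φ ≤ LinearMap.range β := by
    rintro ⟨u⟩ hu
    obtain ⟨m, hm⟩ : (u : M) ∈ LinearMap.range f := (Submodule.Quotient.mk_eq_zero _).mp hu
    exact ⟨⟨m, show f m ∈ U from hm ▸ u.2⟩,
      congrArg Submodule.Quotient.mk (Subtype.ext hm)⟩
  have hαβ : LinearMap.ker α ≤ LinearMap.ker β := by
    rintro w hw
    have hwU : (w : M) ∈ U := (Submodule.Quotient.mk_eq_zero _).mp hw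
    exact (Submodule.Quotient.mk_eq_zero _).mpr ⟨⟨w, hwU⟩, rfl⟩
  have hαf' : LinearMap.range α ≤ LinearMap.ker f' := by
    rintro _ ⟨w, rfl⟩
    exact (Submodule.Quotient.mk_eq_zero _).mpr w.2
  have hφψ : LinearMap.range φ ≤ LinearMap.ker ψ := by
    rintro _ ⟨⟨u⟩, rfl⟩
    exact (Submodule.Quotient.mk_eq_zero _).mpr
      ⟨0, by simp [(Submodule.Quotient.mk_eq_zero U).mpr u.2]⟩
  have hψ : Function.Surjective ψ := by
    rintro ⟨⟨m⟩⟩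
    exact ⟨Submodule.Quotient.mk m, rfl⟩
  calc Module.length R (U ⧸ LinearMap.range fU)
      ≤ Module.length R (LinearMap.range β) + Module.length R (LinearMap.range φ) :=
        length_le_length_range_add_length_range β φ hφβ
    _ ≤ Module.length R (LinearMap.ker f') + Module.length R (LinearMap.ker ψ) := by
        gcongr
        · exact (length_range_le_of_ker_le α β hαβ).trans (length_submodule_mono hαf')
        · exact length_submodule_mono hφψ
    _ ≤ Module.length R ((M ⧸ U) ⧸ LinearMap.range f') +
          Module.length R (LinearMap.ker ψ) := by
        gcongr
        exact length_ker_le_length_quotient_range f'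
    _ = Module.length R (M ⧸ LinearMap.range f) := by
        rw [length_eq_length_ker_add ψ hψ, add_comm]

end Module

lemma Module.length_le_spanFinrank_mul_length_quotient {R P : Type*} [CommRing R] [AddCommGroup P]
    [Module R P] [Module.Finite R P] {J : Ideal R} (hJ : J ≤ Module.annihilator R P) :
    Module.length R P ≤ (⊤ : Submodule R P).spanFinrank * Module.length R (R ⧸ J) := by
  classical
  obtain ⟨s, hs, hspan⟩ :=
    (Module.Finite.fg_top (R := R) (M := P)).exists_span_finset_card_eq_spanFinrank
  have hker (p : P) : J ≤ LinearMap.ker (LinearMap.toSpanSingleton R P p) := fun r hr => by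
    simpa using (Module.mem_annihilator.mp (hJ hr)) p
  set Φ : (s → R ⧸ J) →ₗ[R] P :=
    LinearMap.lsum R (fun _ => R ⧸ J) R fun p => J.liftQ _ (hker p)
  have hΦ : Function.Surjective Φ := by
    intro p
    obtain ⟨c, hc⟩ := (Submodule.mem_span_range_iff_exists_fun R).mp
      (show p ∈ Submodule.span R (Set.range ((↑) : s → P)) by simp [hspan])
    refine ⟨fun i => Submodule.Quotient.mk (c i), ?_⟩
    simp only [Φ, LinearMap.lsum_apply, LinearMap.sum_apply,
      LinearMap.comp_apply, LinearMap.proj_apply, Submodule.liftQ_apply,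
      LinearMap.toSpanSingleton_apply, hc]
  calc Module.length R P ≤ Module.length R (s → R ⧸ J) := length_le_of_surjective Φ hΦ
    _ = _ := by simp [length_pi_of_fintype, hs]

namespace Submodule

variable {R : Type*} [CommRing R] {M M₂ : Type*} [AddCommGroup M] [Module R M]
  [AddCommGroup M₂] [Module R M₂]

lemma spanFinrank_le_spanFinrank_inf_ker_add_spanFinrank_map [IsNoetherian R M]
    (N : Submodule R M) (f : M →ₗ[R] M₂) :
    N.spanFinrank ≤ (N ⊓ LinearMap.ker f).spanFinrank + (N.map f).spanFinrank := by
  obtain ⟨s₁, hs₁, hspan₁⟩ :=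
    (IsNoetherian.noetherian (N ⊓ LinearMap.ker f)).exists_span_set_encard_eq_spanFinrank
  obtain ⟨s₂, hs₂, hspan₂⟩ :=
    ((IsNoetherian.noetherian N).map f).exists_span_set_encard_eq_spanFinrank
  have hs₂N : s₂ ⊆ f '' N := fun y hy => by
    have h : y ∈ span R s₂ := subset_span hy
    rwa [hspan₂, mem_map] at h
  obtain ⟨u, huN, hu⟩ := Set.exists_subset_bijOn (N ∩ f ⁻¹' s₂ : Set M) f
  have hfu : f '' u = s₂ := by
    rw [hu.image_eq, Set.image_inter_preimage, Set.inter_eq_right.mpr hs₂N]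
  have huN : span R u ≤ N := span_le.mpr fun m hm => (huN hm).1
  have hN : N = span R u ⊔ (N ⊓ LinearMap.ker f) := by
    refine le_antisymm (fun n hn => ?_) (sup_le huN inf_le_left)
    obtain ⟨w, hw, hwn⟩ : f n ∈ (span R u).map f := by
      rw [map_span, hfu, hspan₂]
      exact mem_map_of_mem hn
    rw [← add_sub_cancel w n]
    exact add_mem_sup hw ⟨sub_mem hn (huN hw), by simp [hwn]⟩
  have : (N.spanFinrank : ℕ∞) ≤ (N ⊓ LinearMap.ker f).spanFinrank + (N.map f).spanFinrank :=
    calc (N.spanFinrank : ℕ∞) = (span R (u ∪ s₁)).spanFinrank := by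
          rw [span_union, hspan₁, ← hN]
      _ ≤ (u ∪ s₁).encard := spanFinrank_span_le_encard _
      _ ≤ u.encard + s₁.encard := Set.encard_union_le _ _
      _ = _ := by rw [add_comm, hs₁, ← hs₂, ← hfu, hu.injOn.encard_image]
  exact_mod_cast this

variable [IsLocalRing R]

lemma spanFinrank_le_length_quotient (U : Submodule R M) (hU : U.FG)
    {K : Submodule R U} (hK : K ≤ maximalIdeal R • ⊤) :
    (U.spanFinrank : ℕ∞) ≤ Module.length R (U ⧸ K) := by
  let := Ideal.Quotient.field (maximalIdeal R)
  have : Module.Finite R U := Module.Finite.iff_fg.mpr hU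
  have : Module.Finite (R ⧸ maximalIdeal R) (U ⧸ maximalIdeal R • (⊤ : Submodule R U)) :=
    Module.Finite.of_restrictScalars_finite R _ _
  rw [IsLocalRing.spanFinrank_eq_finrank_quotient U hU]
  calc _ = Module.length R (U ⧸ maximalIdeal R • (⊤ : Submodule R U)) :=
        (Module.length_eq_finrank (R ⧸ maximalIdeal R) _).symm.trans
          (Module.length_eq_of_surjective (S := R) Ideal.Quotient.mk_surjective).symm
    _ ≤ Module.length R (U ⧸ K) := Module.length_le_of_surjective _ (factor_surjective hK)

lemma spanFinrank_le_spanFinrank_top_mul_length [IsNoetherian R M] (U : Submodule R M)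
    {x : R} (hx : x ∈ maximalIdeal R) {J : Ideal R}
    (hJ : J ≤ Module.annihilator R (M ⧸ LinearMap.range (LinearMap.lsmul R M x))) :
    (U.spanFinrank : ℕ∞) ≤ (⊤ : Submodule R M).spanFinrank * Module.length R (R ⧸ J) := by
  have hU : ∀ m ∈ U, LinearMap.lsmul R M x m ∈ U := fun m hm => U.smul_mem x hm
  have hM : (⊤ : Submodule R (M ⧸ LinearMap.range (LinearMap.lsmul R M x))).spanFinrank ≤
      (⊤ : Submodule R M).spanFinrank := by
    simpa [map_top] using spanFinrank_map_le_of_fg (LinearMap.range (LinearMap.lsmul R M x)).mkQ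
      (IsNoetherian.noetherian (⊤ : Submodule R M))
  calc (U.spanFinrank : ℕ∞)
      ≤ Module.length R (U ⧸ LinearMap.range ((LinearMap.lsmul R M x).restrict hU)) :=
        spanFinrank_le_length_quotient U (IsNoetherian.noetherian U) <| by
          rintro _ ⟨u, rfl⟩
          exact smul_mem_smul hx mem_top
    _ ≤ Module.length R (M ⧸ LinearMap.range (LinearMap.lsmul R M x)) :=
        Module.length_quotient_range_restrict_le _ U hU
    _ ≤ _ := Module.length_le_spanFinrank_mul_length_quotient hJ
    _ ≤ _ := mul_le_mul_left (by exact_mod_cast hM) _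

end Submodule

namespace Ideal

variable {R : Type*} [CommRing R]

lemma spanFinrank_inf_pow_le [IsLocalRing R] [IsNoetherianRing R] (K L : Ideal R) {x : R}
    (hx : x ∈ maximalIdeal R) (i : ℕ) :
    ((K ⊓ L ^ i).spanFinrank : ℕ∞) ≤ (K ⊓ L ^ (i + 1)).spanFinrank +
      (L ^ i).spanFinrank * Module.length R (R ⧸ (L ⊔ span {x})) := by
  set π := Submodule.mkQ (L ^ (i + 1))
  set E : Submodule R (R ⧸ L ^ (i + 1)) := Submodule.map π (L ^ i)
  set U : Submodule R (R ⧸ L ^ (i + 1)) := Submodule.map π (K ⊓ L ^ i)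
  have hsplit := Submodule.spanFinrank_le_spanFinrank_inf_ker_add_spanFinrank_map (K ⊓ L ^ i) π
  rw [Submodule.ker_mkQ, inf_assoc, inf_eq_right.mpr (pow_le_pow_right i.le_succ)] at hsplit
  have hU : U.spanFinrank = (U.comap E.subtype).spanFinrank := by
    rw [← Submodule.spanFinrank_map_eq_of_injective E.subtype E.injective_subtype,
      Submodule.map_comap_subtype, inf_eq_right.mpr (Submodule.map_mono inf_le_right)]
  have hE : (⊤ : Submodule R E).spanFinrank ≤ (L ^ i).spanFinrank := by
    rw [Submodule.spanFinrank_top]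
    exact Submodule.spanFinrank_map_le_of_fg π (IsNoetherian.noetherian _)
  have hann : L ⊔ span {x} ≤
      Module.annihilator R (E ⧸ LinearMap.range (LinearMap.lsmul R E x)) := by
    refine sup_le (fun l hl => Module.mem_annihilator.mpr fun q => ?_)
      ((span_singleton_le_iff_mem _).mpr (Module.mem_annihilator.mpr fun q => ?_))
    · obtain ⟨⟨_, r, hr, rfl⟩, rfl⟩ := Submodule.mkQ_surjective _ q
      have hlr : l • (⟨π r, r, hr, rfl⟩ : E) = 0 := Subtype.ext <| by
        rw [Submodule.coe_smul, ← map_smul, Submodule.mkQ_apply, ZeroMemClass.coe_zero,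
          Submodule.Quotient.mk_eq_zero, pow_succ']
        exact mul_mem_mul hl hr
      rw [← map_smul, hlr, map_zero]
    · obtain ⟨e, rfl⟩ := Submodule.mkQ_surjective _ q
      rw [← map_smul, Submodule.mkQ_apply, Submodule.Quotient.mk_eq_zero]
      exact ⟨e, rfl⟩
  have key := Submodule.spanFinrank_le_spanFinrank_top_mul_length (U.comap E.subtype) hx hann
  calc ((K ⊓ L ^ i).spanFinrank : ℕ∞)
      ≤ (K ⊓ L ^ (i + 1)).spanFinrank + U.spanFinrank := by exact_mod_cast hsplit
    _ ≤ _ := by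
        rw [hU]
        gcongr
        exact key.trans (mul_le_mul_left (by exact_mod_cast hE) _)

lemma spanFinrank_le_spanFinrank_pow_add_sum [IsLocalRing R] [IsNoetherianRing R]
    {K L : Ideal R} {n : ℕ} (hLK : L ^ n ≤ K) {x : R} (hx : x ∈ maximalIdeal R) :
    (K.spanFinrank : ℕ∞) ≤ (L ^ n).spanFinrank +
      ∑ i ∈ Finset.range n, (L ^ i).spanFinrank * Module.length R (R ⧸ (L ⊔ span {x})) := by
  suffices h : ∀ k, (K.spanFinrank : ℕ∞) ≤ (K ⊓ L ^ k).spanFinrank +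
      ∑ i ∈ Finset.range k, (L ^ i).spanFinrank * Module.length R (R ⧸ (L ⊔ span {x})) by
    simpa [inf_eq_right.mpr hLK] using h n
  intro k
  induction k with
  | zero => simp
  | succ k ih =>
    refine ih.trans ?_
    rw [Finset.sum_range_succ, add_comm _ (_ * _), ← add_assoc]
    gcongr
    exact spanFinrank_inf_pow_le K L hx k

lemma span_range_pow_eq {ι : Type*} (y : ι → R) (i : ℕ) :
    span (Set.range y) ^ i =
      span (Set.range fun s : Sym ι i => ((s : Multiset ι).map y).prod) := by
  induction i with
  | zero =>
    rw [pow_zero, one_eq_top, eq_comm, eq_top_iff_one]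
    exact subset_span ⟨Sym.nil, by simp⟩
  | succ i ih =>
    rw [pow_succ', ih, span_mul_span']
    congr 1
    ext r
    simp only [Set.mem_mul, Set.mem_range]
    constructor
    · rintro ⟨_, ⟨j, rfl⟩, _, ⟨s, rfl⟩, rfl⟩
      exact ⟨j ::ₛ s, by rw [Sym.coe_cons, Multiset.map_cons, Multiset.prod_cons]⟩
    · rintro ⟨s, rfl⟩
      obtain ⟨j, s, rfl⟩ := Sym.exists_eq_cons_of_succ s
      exact ⟨y j, ⟨j, rfl⟩, _, ⟨s, rfl⟩,
        by rw [Sym.coe_cons, Multiset.map_cons, Multiset.prod_cons]⟩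

lemma spanFinrank_span_range_pow_le {e : ℕ} (y : Fin e → R) (i : ℕ) :
    (span (Set.range y) ^ i).spanFinrank ≤ e.multichoose i := by
  classical
  rw [span_range_pow_eq, ← Set.image_univ, ← Finset.coe_univ, ← Finset.coe_image]
  refine (Submodule.spanFinrank_span_le_ncard_of_finite (Finset.finite_toSet _)).trans ?_
  rw [Set.ncard_coe_finset]
  exact Finset.card_image_le.trans (by simp [Sym.card_sym_eq_multichoose])

end Ideal

lemma Nat.sum_range_succ_multichoose (e k : ℕ) :
    ∑ i ∈ Finset.range (k + 1), e.multichoose i = (e + 1).multichoose k := by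
  induction k with
  | zero => simp
  | succ k ih => rw [Finset.sum_range_succ, ih, Nat.multichoose_succ_succ, add_comm]

lemma Nat.sum_range_multichoose_le (e n : ℕ) :
    ∑ i ∈ Finset.range n, e.multichoose i ≤ (e + n - 1).choose e := by
  rcases n with _ | k
  · simp
  · rw [Nat.sum_range_succ_multichoose, Nat.multichoose_eq, show e + 1 + k - 1 = e + k by omega,
      show e + (k + 1) - 1 = e + k by omega, Nat.choose_symm_add]

lemma Nat.multichoose_le_choose_pred (e n : ℕ) :
    e.multichoose n ≤ (e + n - 1).choose (e - 1) := by
  rcases e with _ | e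
  · rcases n with _ | n <;> simp
  · rw [Nat.multichoose_eq, Nat.add_sub_cancel, show e + 1 + n - 1 = e + n by omega,
      Nat.choose_symm_add]

theorem nu_pow_le_choose_bound_general
    (R : Type*) [CommRing R] [IsNoetherianRing R] [IsLocalRing R]
    (d : ℕ) (hd : 1 ≤ d)
    (I : Ideal R)
    (J : Ideal R) (x : Fin d → R) (hJx : J = Ideal.span (Set.range x))
    (hJ : J.radical = maximalIdeal R) (hred : IsReduction J I)
    (lam : ℕ) (hlam : mLength R (R ⧸ J) = (lam : WithBot ℕ∞))
    (n : ℕ) :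
    nu (I ^ n) ≤ (d + n - 2).choose (d - 2) + lam * (d + n - 2).choose (d - 1) := by
  obtain ⟨e, rfl⟩ : ∃ e, d = e + 1 := ⟨d - 1, by omega⟩
  set L := Ideal.span (Set.range (Fin.tail x))
  have hJL : J = L ⊔ Ideal.span {x 0} := by
    rw [hJx, Fin.range_fin_succ, Ideal.span_insert, sup_comm]
  have hx0 : x 0 ∈ maximalIdeal R :=
    hJ ▸ Ideal.le_radical (hJL ▸ Ideal.mem_sup_right (Ideal.mem_span_singleton_self _))
  have hlen : Module.length R (R ⧸ (L ⊔ Ideal.span {x 0})) ≤ lam := by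
    rw [mLength_eq_length, hJL] at hlam
    exact_mod_cast hlam.le
  have hLpow (i : ℕ) : (L ^ i).spanFinrank ≤ e.multichoose i :=
    Ideal.spanFinrank_span_range_pow_le (Fin.tail x) i
  rw [nu_eq_spanFinrank, show e + 1 + n - 2 = e + n - 1 by omega,
    show e + 1 - 2 = e - 1 by omega, Nat.add_sub_cancel, ← Nat.cast_le (α := ℕ∞)]
  calc ((I ^ n).spanFinrank : ℕ∞)
      ≤ (L ^ n).spanFinrank + ∑ i ∈ Finset.range n,
          (L ^ i).spanFinrank * Module.length R (R ⧸ (L ⊔ Ideal.span {x 0})) :=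
        Ideal.spanFinrank_le_spanFinrank_pow_add_sum
          (Ideal.pow_right_mono ((hJL ▸ le_sup_left).trans hred.1) n) hx0
    _ ≤ e.multichoose n + ∑ i ∈ Finset.range n, (e.multichoose i : ℕ∞) * lam := by
        gcongr with i
        exacts [hLpow n, hLpow i]
    _ ≤ _ := by
        rw [← Finset.sum_mul, mul_comm]
        exact_mod_cast add_le_add (Nat.multichoose_le_choose_pred e n)
          (Nat.mul_le_mul_left lam (Nat.sum_range_multichoose_le e n))

/-- Let `(R, m)` be a Noetherian local ring of dimension `d ≥ 1` with infinite residue field,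
`I` an `m`-primary ideal and `J` a minimal reduction of `I` generated by a system of
parameters `x₁, …, x_d`. Then for every `n ≥ 1`,
`ν(Iⁿ) ≤ C(d+n−2, d−2) + λ(R/J)·C(d+n−2, d−1)`. -/
theorem nu_pow_le_choose_bound
    (R : Type*) [CommRing R] [IsNoetherianRing R] [IsLocalRing R]
    [Infinite (ResidueField R)]
    (d : ℕ) (hd : 1 ≤ d) (hdim : ringKrullDim R = d)
    (I : Ideal R) (hI : I.radical = maximalIdeal R)
    (J : Ideal R) (x : Fin d → R) (hJx : J = Ideal.span (Set.range x))
    (hJ : J.radical = maximalIdeal R) (hred : IsReduction J I)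
    (lam : ℕ) (hlam : mLength R (R ⧸ J) = (lam : WithBot ℕ∞))
    (n : ℕ) (hn : 1 ≤ n) :
    nu (I ^ n) ≤ (d + n - 2).choose (d - 2) + lam * (d + n - 2).choose (d - 1) :=
  nu_pow_le_choose_bound_general R d hd I J x hJx hJ hred lam hlam n
end
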